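/- Let G be a group and L a normal subgroup of G, let H := G ×_L G = {(a₁,a₂) ∈ G × G : a₁a₂⁻¹ ∈ L}, and let [H,H] denote its commutator subgroup. Then the groups (G ⧸ [G,G]) × (L ⧸ ⁅G,L⁆) and H ⧸ [H,H] are isomorphic; an isomorphism is induced by the map (a,b) ↦ (a, ba)·[H,H] for a ∈ G, b ∈ L, which is a surjective homomorphism G × L → H ⧸ [H,H] with kernel [G,G] × ⁅G,L⁆. (Corollary 2.8 of the paper; stated there for nilpotent Lie groups, the group isomorphism being the content.) -/

import Mathlib

/-- The relatively independent self-product `G ×_L G` of a group `G` over a normal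
subgroup `L`, i.e. the subgroup `{(a₁, a₂) ∈ G × G : a₁ * a₂⁻¹ ∈ L}` of `G × G`. -/
def relProd {G : Type*} [Group G] (L : Subgroup G) [hN : L.Normal] : Subgroup (G × G) where
  carrier := {p : G × G | p.1 * p.2⁻¹ ∈ L}
  one_mem' := by simpa using L.one_mem
  mul_mem' := by
    rintro ⟨a₁, a₂⟩ ⟨b₁, b₂⟩ ha hb
    have h : (a₁ * b₁) * (a₂ * b₂)⁻¹ = (a₁ * (b₁ * b₂⁻¹) * a₁⁻¹) * (a₁ * a₂⁻¹) := by group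
    simp only [Set.mem_setOf_eq] at ha hb
    show a₁ * b₁ * (a₂ * b₂)⁻¹ ∈ L
    rw [h]
    exact mul_mem (hN.conj_mem _ hb a₁) ha
  inv_mem' := by
    rintro ⟨a₁, a₂⟩ ha
    simp only [Set.mem_setOf_eq] at ha
    have h : a₁⁻¹ * (a₂⁻¹)⁻¹ = a₁⁻¹ * (a₁ * a₂⁻¹)⁻¹ * (a₁⁻¹)⁻¹ := by group
    show a₁⁻¹ * (a₂⁻¹)⁻¹ ∈ L
    rw [h]
    exact hN.conj_mem _ (L.inv_mem ha) a₁⁻¹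

theorem mem_relProd {G : Type*} [Group G] {L : Subgroup G} [L.Normal] {p : G × G} :
    p ∈ relProd L ↔ p.1 * p.2⁻¹ ∈ L := Iff.rfl

/-
Writing an element of `H = G ×_L G` as `(1, b) * (a, a)` with `b ∈ L` identifies `H` with the
semidirect product `L ⋊ G`. Modulo `⁅H, H⁆` the two factors commute, so `(a, b) ↦ (a, b a)`
becomes a homomorphism. Its kernel is read off from two homomorphisms out of `H` into abelian
groups: the first coordinate modulo `[G, G]`, and `(x₁, x₂) ↦ x₂ x₁⁻¹` modulo `⁅G, L⁆`, which is
multiplicative because `L` is central modulo `⁅G, L⁆`. Conversely `(1, [g, l]) = [(g, g), (1, l)]`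
puts `1 × ⁅G, L⁆` inside `⁅H, H⁆`.
-/

open scoped IsMulCommutative commutatorElement

theorem Subgroup.commutator_le_commutator_top_subgroupOf {G : Type*} [Group G]
    (L : Subgroup G) : _root_.commutator L ≤ (⁅(⊤ : Subgroup G), L⁆).subgroupOf L :=
  Subgroup.commutator_le.mpr fun _ _ y _ =>
    Subgroup.commutator_mem_commutator (Subgroup.mem_top _) y.2

instance {G : Type*} [Group G] (L : Subgroup G) [L.Normal] :
    IsMulCommutative (L ⧸ (⁅(⊤ : Subgroup G), L⁆).subgroupOf L) :=
  Subgroup.Normal.quotient_commutative_iff_commutator_le.mpr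
    L.commutator_le_commutator_top_subgroupOf

namespace relProd

variable {G : Type*} [Group G] (L : Subgroup G) [L.Normal]

def diag : G →* relProd L :=
  (MonoidHom.prod (MonoidHom.id G) (MonoidHom.id G)).codRestrict _ fun _ =>
    mem_relProd.mpr (by simp)

def inr : L →* relProd L :=
  ((MonoidHom.inr G G).comp L.subtype).codRestrict _ fun _ =>
    mem_relProd.mpr (by simp)

def diffMod : relProd L →* L ⧸ (⁅(⊤ : Subgroup G), L⁆).subgroupOf L where
  toFun x := QuotientGroup.mk
    (⟨x.1.2 * x.1.1⁻¹, by simpa using L.inv_mem (mem_relProd.mp x.2)⟩ : L)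
  map_one' := (QuotientGroup.eq_one_iff _).mpr (by simp [Subgroup.mem_subgroupOf])
  map_mul' := by
    rintro ⟨⟨x₁, x₂⟩, -⟩ ⟨⟨y₁, y₂⟩, hy⟩
    rw [← QuotientGroup.mk_mul, QuotientGroup.eq, Subgroup.mem_subgroupOf]
    convert Subgroup.commutator_mem_commutator (Subgroup.mem_top x₁) (mem_relProd.mp hy) using 1
    simp only [Subgroup.coe_mul, Subgroup.coe_inv, Prod.fst_mul, Prod.snd_mul,
      commutatorElement_def]
    group

theorem inr_mem_commutator {b : L} (hb : (b : G) ∈ ⁅(⊤ : Subgroup G), L⁆) :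
    inr L b ∈ commutator (relProd L) := by
  have hsub : ⁅(⊤ : Subgroup G), L⁆ ≤
      ((commutator (relProd L)).map (relProd L).subtype).comap (MonoidHom.inr G G) := by
    refine Subgroup.commutator_le.mpr fun g _ l hl => ?_
    have hcomm : ⁅diag L g, inr L ⟨l, hl⟩⁆ ∈ commutator (relProd L) :=
      Subgroup.commutator_mem_commutator (Subgroup.mem_top _) (Subgroup.mem_top _)
    convert Subgroup.mem_map_of_mem (relProd L).subtype hcomm using 1
    simp [diag, inr, commutatorElement_def]
  exact (Subgroup.mem_map_iff_mem (relProd L).subtype_injective).mp (hsub hb)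

def abelianizationHom : G × L →* Abelianization (relProd L) :=
  (Abelianization.of.comp (diag L)).coprod (Abelianization.of.comp (inr L))

theorem abelianizationHom_apply (a : G) (b : L) :
    abelianizationHom L (a, b) =
      Abelianization.of ⟨(a, (b : G) * a), mem_relProd.mpr (by simp)⟩ := by
  rw [abelianizationHom, MonoidHom.coprod_apply, mul_comm]
  simp only [MonoidHom.comp_apply, ← map_mul]
  congr 1
  ext <;> simp [diag, inr]

theorem abelianizationHom_surjective : Function.Surjective (abelianizationHom L) := by
  rintro ⟨⟨x₁, x₂⟩, hx⟩
  have hb : x₂ * x₁⁻¹ ∈ L := by simpa using L.inv_mem (mem_relProd.mp hx)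
  refine ⟨(x₁, ⟨x₂ * x₁⁻¹, hb⟩), ?_⟩
  rw [abelianizationHom_apply]
  simp

def abelianizationInv :
    Abelianization (relProd L) →* Abelianization G × (L ⧸ (⁅(⊤ : Subgroup G), L⁆).subgroupOf L) :=
  Abelianization.lift
    ((Abelianization.of.comp ((MonoidHom.fst G G).comp (relProd L).subtype)).prod (diffMod L))

theorem abelianizationInv_abelianizationHom (a : G) (b : L) :
    abelianizationInv L (abelianizationHom L (a, b)) =
      (Abelianization.of a, QuotientGroup.mk b) := by
  simp [abelianizationInv, abelianizationHom_apply, diffMod]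

theorem ker_abelianizationHom :
    (abelianizationHom L).ker = (commutator G).prod ((⁅(⊤ : Subgroup G), L⁆).subgroupOf L) := by
  ext ⟨a, b⟩
  rw [MonoidHom.mem_ker, Subgroup.mem_prod]
  constructor
  · intro h
    have hinv := abelianizationInv_abelianizationHom L a b
    rw [h, map_one, eq_comm, Prod.mk_eq_one, ← MonoidHom.mem_ker, Abelianization.ker_of,
      QuotientGroup.eq_one_iff] at hinv
    exact hinv
  · rintro ⟨ha, hb⟩
    have hdiag : Abelianization.of (diag L a) = 1 :=
      Abelianization.commutator_subset_ker (Abelianization.of.comp (diag L)) ha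
    have hinr : Abelianization.of (inr L b) = 1 := by
      rw [← MonoidHom.mem_ker, Abelianization.ker_of]
      exact inr_mem_commutator L hb
    simp [abelianizationHom, hdiag, hinr]

end relProd

/-- **Corollary 2.8.** With `H := G ×_L G`, the groups `(G ⧸ [G,G]) × (L ⧸ ⁅G,L⁆)` and
`H ⧸ [H,H]` are isomorphic; an isomorphism is induced by the map `(a,b) ↦ (a, b·a)·[H,H]`,
which is a surjective homomorphism `G × L → H ⧸ [H,H]` with kernel `[G,G] × ⁅G,L⁆`. -/
theorem relProd_abelianization {G : Type*} [Group G] (L : Subgroup G) [L.Normal] :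
    ∃ φ : G × L →* (↥(relProd L) ⧸ commutator ↥(relProd L)),
      (∀ (a : G) (b : L), φ (a, b) =
        QuotientGroup.mk (⟨(a, (b : G) * a), mem_relProd.mpr
          (by simp [mul_inv_rev, mul_inv_cancel_left])⟩ :
            ↥(relProd L))) ∧
      Function.Surjective φ ∧
      φ.ker = (commutator G).prod ((⁅(⊤ : Subgroup G), L⁆).subgroupOf L) ∧
      Nonempty (((G ⧸ commutator G) × (↥L ⧸ (⁅(⊤ : Subgroup G), L⁆).subgroupOf L)) ≃*
        (↥(relProd L) ⧸ commutator ↥(relProd L))) := by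
  have hsurj := relProd.abelianizationHom_surjective L
  have hker := relProd.ker_abelianizationHom L
  have hquot : Function.Surjective ((QuotientGroup.mk' (commutator G)).prodMap
      (QuotientGroup.mk' ((⁅(⊤ : Subgroup G), L⁆).subgroupOf L))) :=
    (QuotientGroup.mk'_surjective _).prodMap (QuotientGroup.mk'_surjective _)
  have hkers : ((QuotientGroup.mk' (commutator G)).prodMap
      (QuotientGroup.mk' ((⁅(⊤ : Subgroup G), L⁆).subgroupOf L))).ker =
        (relProd.abelianizationHom L).ker := by
    rw [MonoidHom.ker_prodMap, QuotientGroup.ker_mk', QuotientGroup.ker_mk', hker]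
  exact ⟨relProd.abelianizationHom L, relProd.abelianizationHom_apply L, hsurj, hker,
    ⟨(QuotientGroup.quotientKerEquivOfSurjective _ hquot).symm.trans
      ((QuotientGroup.quotientMulEquivOfEq hkers).trans
        (QuotientGroup.quotientKerEquivOfSurjective _ hsurj))⟩⟩
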